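/- Let F : ℝ² → ℝ² be a C² diffeomorphism given in null coordinates by (σ,τ) = F(u,v). Suppose: (a) for every C² function θ, θ has vanishing mixed partial ∂²θ/∂σ∂τ if and only if ∂²(θ∘F)/∂u∂v = 0; (b) σ_u τ_v + σ_v τ_u ≥ 0 everywhere; (c) ∂(σ - τ)/∂t ≥ 0 everywhere, where ∂/∂t = ∂/∂u - ∂/∂v. Then F is a causal automorphism of two-dimensional Minkowski spacetime: there exist homeomorphisms φ, ψ of ℝ, both strictly increasing or both strictly decreasing, such that F(u,v) = (φ(u), ψ(v)) in the increasing case or F(u,v) = (φ(v), ψ(u)) in the decreasing case. -/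

import Mathlib

/-!
Composing with a coordinate and with its square, hypothesis (a) shows that `σ`, `σ²`, `τ`, `τ²`
all solve the wave equation `θ_uv = 0`. A `C²` solution separates as `A(u) + B(v)`, and `(A + B)²`
is again a solution only if `(A(u) - A(0)) (B(v) - B(0)) ≡ 0`; so `σ` and `τ` each depend on a
single null coordinate, and injectivity of `F` forces them to depend on different ones.
For `F = (φ(u), ψ(v))` conditions (b) and (c) read `φ' ψ' ≥ 0` and `φ' + ψ' ≥ 0`, hence
`φ', ψ' ≥ 0` and the injective `φ`, `ψ` are strictly increasing; for `F = (φ(v), ψ(u))` they read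
`φ' ψ' ≥ 0` and `φ' + ψ' ≤ 0`, and `φ`, `ψ` are strictly decreasing.
-/

/-- The causal relation on ℝ² in null coordinates. -/
def causal (p q : ℝ × ℝ) : Prop := p.1 ≤ q.1 ∧ q.2 ≤ p.2

/-- Partial derivative in the first variable. -/
noncomputable def pd1 (f : ℝ × ℝ → ℝ) (p : ℝ × ℝ) : ℝ := deriv (fun x => f (x, p.2)) p.1

/-- Partial derivative in the second variable. -/
noncomputable def pd2 (f : ℝ × ℝ → ℝ) (p : ℝ × ℝ) : ℝ := deriv (fun y => f (p.1, y)) p.2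

open Function

def SolvesWaveEquation (f : ℝ × ℝ → ℝ) : Prop := ∀ p, pd2 (pd1 f) p = 0

lemma hasDerivAt_pd1 {f : ℝ × ℝ → ℝ} (hf : Differentiable ℝ f) (p : ℝ × ℝ) :
    HasDerivAt (fun x => f (x, p.2)) (pd1 f p) p.1 :=
  (hf.comp (differentiable_id.prodMk (differentiable_const p.2))).differentiableAt.hasDerivAt

lemma contDiff_pd1 {f : ℝ × ℝ → ℝ} {m n : WithTop ℕ∞} (hf : ContDiff ℝ n f) (hmn : m + 1 ≤ n) :
    ContDiff ℝ m (pd1 f) := by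
  have hd : Differentiable ℝ f :=
    hf.differentiable (zero_lt_one.trans_le (le_add_self.trans hmn)).ne'
  have h : pd1 f = fun p => fderiv ℝ f p (1, 0) := funext fun p =>
    (hasDerivAt_pd1 hd p).unique <| (hd p).hasFDerivAt.comp_hasDerivAt p.1
      ((hasDerivAt_id p.1).prodMk (hasDerivAt_const p.1 p.2))
  exact h ▸ (hf.fderiv_right hmn).clm_apply contDiff_const

theorem SolvesWaveEquation.eq_add {f : ℝ × ℝ → ℝ} (hf : ContDiff ℝ 2 f)
    (hw : SolvesWaveEquation f) (u v : ℝ) : f (u, v) = f (u, 0) + f (0, v) - f (0, 0) := by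
  have hd : Differentiable ℝ f := hf.differentiable two_ne_zero
  have hd1 : Differentiable ℝ (pd1 f) :=
    (contDiff_pd1 (m := 1) hf (by norm_num)).differentiable one_ne_zero
  have pd1_eq : ∀ x y, pd1 f (x, y) = pd1 f (x, 0) := fun x y =>
    is_const_of_deriv_eq_zero (hd1.comp ((differentiable_const x).prodMk differentiable_id))
      (fun t => hw (x, t)) y 0
  have hdiff : ∀ x, HasDerivAt (fun x => f (x, v) - f (x, 0)) 0 x := fun x => by
    have h : HasDerivAt (fun x => f (x, v) - f (x, 0)) (pd1 f (x, v) - pd1 f (x, 0)) x :=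
      (hasDerivAt_pd1 hd (x, v)).sub (hasDerivAt_pd1 hd (x, 0))
    rwa [pd1_eq, sub_self] at h
  have := is_const_of_deriv_eq_zero (fun x => (hdiff x).differentiableAt)
    (fun x => (hdiff x).deriv) u 0
  linarith

theorem SolvesWaveEquation.eq_comp_fst_or_eq_comp_snd {f : ℝ × ℝ → ℝ} (hf : ContDiff ℝ 2 f)
    (hw : SolvesWaveEquation f) (hw₂ : SolvesWaveEquation fun p => f p ^ 2) :
    (∃ g : ℝ → ℝ, f = fun p => g p.1) ∨ ∃ g : ℝ → ℝ, f = fun p => g p.2 := by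
  have key : ∀ u v, (f (u, 0) - f (0, 0)) * (f (0, v) - f (0, 0)) = 0 := fun u v => by
    have h := hw₂.eq_add (hf.pow 2) u v
    rw [hw.eq_add hf u v] at h
    linear_combination h / 2
  by_cases hu : ∀ u, f (u, 0) = f (0, 0)
  · refine Or.inr ⟨fun v => f (0, v), funext fun p => ?_⟩
    rw [hw.eq_add hf p.1 p.2, hu]
    ring
  · push Not at hu
    obtain ⟨u₀, hu₀⟩ := hu
    have hv : ∀ v, f (0, v) = f (0, 0) := fun v =>
      sub_eq_zero.1 ((mul_eq_zero.1 (key u₀ v)).resolve_left (sub_ne_zero.2 hu₀))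
    refine Or.inl ⟨fun u => f (u, 0), funext fun p => ?_⟩
    rw [hw.eq_add hf p.1 p.2, hv]
    ring

lemma solvesWaveEquation_comp_fst (g : ℝ → ℝ) : SolvesWaveEquation fun p => g p.1 := by
  simp [SolvesWaveEquation, pd1, pd2]

lemma solvesWaveEquation_comp_snd (g : ℝ → ℝ) : SolvesWaveEquation fun p => g p.2 := by
  simp [SolvesWaveEquation, pd1, pd2]

lemma nonneg_and_nonneg_of_mul_nonneg_of_add_nonneg {α : Type*} [CommRing α] [LinearOrder α]
    [IsStrictOrderedRing α] {a b : α} (hmul : 0 ≤ a * b) (hadd : 0 ≤ a + b) : 0 ≤ a ∧ 0 ≤ b := by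
  constructor <;> nlinarith

section Monotonicity

variable {φ ψ : ℝ → ℝ} (hφ : Differentiable ℝ φ) (hψ : Differentiable ℝ ψ)
  (hφi : Injective φ) (hψi : Injective ψ) (hmul : ∀ x y, 0 ≤ deriv φ x * deriv ψ y)
include hφ hψ hφi hψi hmul

theorem strictMono_of_deriv_add_nonneg (hadd : ∀ x y, 0 ≤ deriv φ x + deriv ψ y) :
    StrictMono φ ∧ StrictMono ψ :=
  have h x y := nonneg_and_nonneg_of_mul_nonneg_of_add_nonneg (hmul x y) (hadd x y)
  ⟨(monotone_of_deriv_nonneg hφ fun x => (h x 0).1).strictMono_of_injective hφi,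
    (monotone_of_deriv_nonneg hψ fun y => (h 0 y).2).strictMono_of_injective hψi⟩

theorem strictAnti_of_deriv_add_nonpos (hadd : ∀ x y, deriv φ x + deriv ψ y ≤ 0) :
    StrictAnti φ ∧ StrictAnti ψ :=
  have h x y := nonneg_and_nonneg_of_mul_nonneg_of_add_nonneg (a := -deriv φ x)
    (b := -deriv ψ y) (by simpa using hmul x y) (by linarith [hadd x y])
  ⟨(antitone_of_deriv_nonpos hφ fun x => neg_nonneg.1 (h x 0).1).strictAnti_of_injective hφi,
    (antitone_of_deriv_nonpos hψ fun y => neg_nonneg.1 (h 0 y).2).strictAnti_of_injective hψi⟩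

end Monotonicity

lemma StrictMono.exists_homeomorph {α β : Type*} [LinearOrder α] [TopologicalSpace α]
    [OrderTopology α] [LinearOrder β] [TopologicalSpace β] [OrderTopology β] {f : α → β}
    (hf : StrictMono f) (hs : Surjective f) : ∃ e : α ≃ₜ β, ⇑e = f :=
  ⟨(hf.orderIsoOfSurjective f hs).toHomeomorph, rfl⟩

lemma StrictAnti.exists_homeomorph {f : ℝ → ℝ} (hf : StrictAnti f) (hs : Surjective f) :
    ∃ e : ℝ ≃ₜ ℝ, ⇑e = f := by
  obtain ⟨e, he⟩ := StrictMono.exists_homeomorph (f := fun x => -f x)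
    (fun _ _ h => neg_lt_neg (hf h)) (fun y => (hs (-y)).imp fun _ h => by simp [h])
  exact ⟨e.trans (Homeomorph.neg ℝ), by ext; simp [he]⟩

lemma causal_prodMap_iff {φ ψ : ℝ → ℝ} (hφ : StrictMono φ) (hψ : StrictMono ψ) (p q : ℝ × ℝ) :
    causal (φ p.1, ψ p.2) (φ q.1, ψ q.2) ↔ causal p q :=
  and_congr hφ.le_iff_le hψ.le_iff_le

lemma causal_prodMap_swap_iff {φ ψ : ℝ → ℝ} (hφ : StrictAnti φ) (hψ : StrictAnti ψ)
    (p q : ℝ × ℝ) : causal (φ p.2, ψ p.1) (φ q.2, ψ q.1) ↔ causal p q :=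
  (and_congr hφ.le_iff_ge hψ.le_iff_ge).trans and_comm

lemma differentiable_of_contDiff_comp_fst {g : ℝ → ℝ} {n : WithTop ℕ∞}
    (hg : ContDiff ℝ n fun p : ℝ × ℝ => g p.1) (hn : n ≠ 0) : Differentiable ℝ g :=
  (hg.comp (contDiff_id.prodMk (contDiff_const (c := 0)))).differentiable hn

lemma differentiable_of_contDiff_comp_snd {g : ℝ → ℝ} {n : WithTop ℕ∞}
    (hg : ContDiff ℝ n fun p : ℝ × ℝ => g p.2) (hn : n ≠ 0) : Differentiable ℝ g :=
  (hg.comp ((contDiff_const (c := 0)).prodMk contDiff_id)).differentiable hn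

theorem causal_automorphism_of_wave_invariance_general
    (σ τ : ℝ × ℝ → ℝ) (hσ : ContDiff ℝ 2 σ) (hτ : ContDiff ℝ 2 τ)
    (F : ℝ × ℝ → ℝ × ℝ) (hF : ∀ p, F p = (σ p, τ p))
    (hFb : Function.Bijective F)
    (ha : ∀ θ : ℝ × ℝ → ℝ, ContDiff ℝ 2 θ →
      ((∀ p : ℝ × ℝ, pd2 (pd1 θ) p = 0) ↔ (∀ p : ℝ × ℝ, pd2 (pd1 (θ ∘ F)) p = 0)))
    (hb : ∀ p : ℝ × ℝ, pd1 σ p * pd2 τ p + pd2 σ p * pd1 τ p ≥ 0)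
    (hc : ∀ p : ℝ × ℝ,
      (pd1 (fun q => σ q - τ q) p - pd2 (fun q => σ q - τ q) p) ≥ 0) :
    (∀ p q, causal p q ↔ causal (F p) (F q)) ∧
    ∃ φ ψ : ℝ → ℝ, (∃ eφ : ℝ ≃ₜ ℝ, ⇑eφ = φ) ∧ (∃ eψ : ℝ ≃ₜ ℝ, ⇑eψ = ψ) ∧
      ((StrictMono φ ∧ StrictMono ψ ∧ ∀ p : ℝ × ℝ, F p = (φ p.1, ψ p.2)) ∨
       (StrictAnti φ ∧ StrictAnti ψ ∧ ∀ p : ℝ × ℝ, F p = (φ p.2, ψ p.1))) := by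
  obtain rfl : F = fun p => (σ p, τ p) := funext hF
  have hwσ (g : ℝ → ℝ) (hg : ContDiff ℝ 2 g) : SolvesWaveEquation fun p => g (σ p) :=
    (ha _ (hg.comp contDiff_fst)).1 (solvesWaveEquation_comp_fst g)
  have hwτ (g : ℝ → ℝ) (hg : ContDiff ℝ 2 g) : SolvesWaveEquation fun p => g (τ p) :=
    (ha _ (hg.comp contDiff_snd)).1 (solvesWaveEquation_comp_snd g)
  rcases SolvesWaveEquation.eq_comp_fst_or_eq_comp_snd hσ (hwσ id contDiff_id)
      (hwσ _ (contDiff_id.pow 2)) with ⟨φ, rfl⟩ | ⟨φ, rfl⟩ <;>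
  rcases SolvesWaveEquation.eq_comp_fst_or_eq_comp_snd hτ (hwτ id contDiff_id)
      (hwτ _ (contDiff_id.pow 2)) with ⟨ψ, rfl⟩ | ⟨ψ, rfl⟩
  · exact absurd (congrArg Prod.snd (hFb.1 (a₁ := (0, 0)) (a₂ := (0, 1)) rfl)) zero_ne_one
  · obtain ⟨⟨hφi, hφs⟩, hψi, hψs⟩ := Prod.map_bijective.1 hFb
    obtain ⟨hφm, hψm⟩ := strictMono_of_deriv_add_nonneg
      (differentiable_of_contDiff_comp_fst hσ two_ne_zero)
      (differentiable_of_contDiff_comp_snd hτ two_ne_zero) hφi hψi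
      (fun u v => by simpa [pd1, pd2] using hb (u, v))
      (fun u v => by simpa [pd1, pd2] using hc (u, v))
    exact ⟨fun p q => (causal_prodMap_iff hφm hψm p q).symm, φ, ψ, hφm.exists_homeomorph hφs,
      hψm.exists_homeomorph hψs, Or.inl ⟨hφm, hψm, fun _ => rfl⟩⟩
  · obtain ⟨⟨hφi, hφs⟩, hψi, hψs⟩ := Prod.map_bijective.1 (hFb.comp Prod.swap_bijective)
    obtain ⟨hφm, hψm⟩ := strictAnti_of_deriv_add_nonpos
      (differentiable_of_contDiff_comp_snd hσ two_ne_zero)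
      (differentiable_of_contDiff_comp_fst hτ two_ne_zero) hφi hψi
      (fun v u => by simpa [pd1, pd2, mul_comm] using hb (u, v))
      (fun v u => by simpa [pd1, pd2, le_neg_iff_add_nonpos_right] using hc (u, v))
    exact ⟨fun p q => (causal_prodMap_swap_iff hφm hψm p q).symm, φ, ψ,
      hφm.exists_homeomorph hφs, hψm.exists_homeomorph hψs, Or.inr ⟨hφm, hψm, fun _ => rfl⟩⟩
  · exact absurd (congrArg Prod.fst (hFb.1 (a₁ := (0, 0)) (a₂ := (1, 0)) rfl)) zero_ne_one

/-- Main theorem: a C² diffeomorphism of ℝ² preserving the wave equation,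
with `σ_u τ_v + σ_v τ_u ≥ 0` and `∂(σ-τ)/∂t ≥ 0`, is a causal automorphism:
it has the form `(φ(u), ψ(v))` with φ, ψ increasing homeomorphisms, or
`(φ(v), ψ(u))` with φ, ψ decreasing homeomorphisms. -/
theorem causal_automorphism_of_wave_invariance
    (σ τ : ℝ × ℝ → ℝ) (hσ : ContDiff ℝ 2 σ) (hτ : ContDiff ℝ 2 τ)
    (F : ℝ × ℝ → ℝ × ℝ) (hF : ∀ p, F p = (σ p, τ p))
    (hFb : Function.Bijective F)
    (hFinv : ∃ G : ℝ × ℝ → ℝ × ℝ, ContDiff ℝ 2 G ∧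
      Function.LeftInverse G F ∧ Function.RightInverse G F)
    (ha : ∀ θ : ℝ × ℝ → ℝ, ContDiff ℝ 2 θ →
      ((∀ p : ℝ × ℝ, pd2 (pd1 θ) p = 0) ↔ (∀ p : ℝ × ℝ, pd2 (pd1 (θ ∘ F)) p = 0)))
    (hb : ∀ p : ℝ × ℝ, pd1 σ p * pd2 τ p + pd2 σ p * pd1 τ p ≥ 0)
    (hc : ∀ p : ℝ × ℝ,
      (pd1 (fun q => σ q - τ q) p - pd2 (fun q => σ q - τ q) p) ≥ 0) :
    (∀ p q, causal p q ↔ causal (F p) (F q)) ∧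
    ∃ φ ψ : ℝ → ℝ, (∃ eφ : ℝ ≃ₜ ℝ, ⇑eφ = φ) ∧ (∃ eψ : ℝ ≃ₜ ℝ, ⇑eψ = ψ) ∧
      ((StrictMono φ ∧ StrictMono ψ ∧ ∀ p : ℝ × ℝ, F p = (φ p.1, ψ p.2)) ∨
       (StrictAnti φ ∧ StrictAnti ψ ∧ ∀ p : ℝ × ℝ, F p = (φ p.2, ψ p.1))) :=
  causal_automorphism_of_wave_invariance_general σ τ hσ hτ F hF hFb ha hb hc
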